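/- In the braid group B_6, let γ = [1,1,2,1,3,4,3,4,3,5,4,3,5,2,4,1,3,1,2,1,3,4,5,4,3,5,4,3,5,5,5,4,3,2,1,3,4,5,4,4,5,4,3,2,4,3,4] (the braid word for o9_40504) and α' = [-4,-3,-2,-1,5,2,4,3,-5,-4,-3,5,4]. Then α'⁻¹·γ·α' = [(1,2,3,4,5)^8, 5,4,5,5,5,4,5]. -/

import Mathlib

/-- The Artin braid relations on `n` generators (so this presents the braid
group on `n + 1` strands); generator `i : Fin n` corresponds to `σ_{i+1}`. -/
def braidRels (n : ℕ) : Set (FreeGroup (Fin n)) :=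
  { r | (∃ i j : Fin n, (i : ℕ) + 1 = j ∧
          r = FreeGroup.of i * FreeGroup.of j * FreeGroup.of i *
              (FreeGroup.of j * FreeGroup.of i * FreeGroup.of j)⁻¹) ∨
        (∃ i j : Fin n, (i : ℕ) + 2 ≤ (j : ℕ) ∧
          r = FreeGroup.of i * FreeGroup.of j * (FreeGroup.of j * FreeGroup.of i)⁻¹) }

/-- The braid group on `n + 1` strands, with `n` Artin generators. -/
def BraidGroup (n : ℕ) : Type := PresentedGroup (braidRels n)

instance (n : ℕ) : Group (BraidGroup n) :=
  inferInstanceAs (Group (PresentedGroup (braidRels n)))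

/-- The Artin generator `σ_{i+1}` of the braid group on `n + 1` strands. -/
def braidGen {n : ℕ} (i : Fin n) : BraidGroup n := PresentedGroup.of i

/-- The letter of a braid word: a nonzero integer `a` denotes
`σ_{|a|}^{sign a}`. (Out-of-range letters give `1`.) -/
noncomputable def braidLetter (n : ℕ) (a : ℤ) : BraidGroup n :=
  if h : a.natAbs - 1 < n then
    (braidGen (⟨a.natAbs - 1, h⟩ : Fin n)) ^ (if 0 < a then (1 : ℤ) else -1)
  else 1

/-- The element of the braid group represented by a braid word. -/
noncomputable def braidWord (n : ℕ) (w : List ℤ) : BraidGroup n :=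
  (w.map (braidLetter n)).prod

/-!
Both sides are compared by rewriting the braid word `r⁻¹ α'⁻¹ γ α'` (with `r` the claimed
conjugate) to the empty word by moves that visibly preserve the braid: cancelling `σ_i σ_i⁻¹`,
commuting `σ_i^{±1}` past `σ_j^{±1}` for `|i - j| ≥ 2`, and a rewriting of `σ_i^ε σ_{i+1}^δ`
obtained from the braid relation. A sequence of 417 such moves, found by computer search, is
replayed by `decide`.
-/

theorem SemiconjBy.zpow_braid {G : Type*} [Group G] {s t : G} (h : s * t * s = t * s * t)
    {ε : ℤ} (hε : ε.natAbs = 1) (δ : ℤ) : SemiconjBy (t ^ ε * s ^ ε) (t ^ δ) (s ^ δ) := by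
  have hst : SemiconjBy (s * t) s t := by simp only [SemiconjBy, ← mul_assoc, h]
  refine SemiconjBy.zpow_right ?_ δ
  rcases Int.natAbs_eq_iff.mp hε with rfl | rfl
  · simp only [Nat.cast_one, zpow_one, SemiconjBy, mul_assoc, ← h]
  · simpa using hst.inv_symm_left

theorem zpow_mul_zpow_of_braid {G : Type*} [Group G] {s t : G} (h : s * t * s = t * s * t)
    {ε : ℤ} (hε : ε.natAbs = 1) (δ : ℤ) :
    s ^ ε * t ^ δ = t ^ (-ε) * s ^ δ * t ^ ε * s ^ ε := by
  rw [mul_assoc _ (t ^ ε), mul_assoc (t ^ (-ε)), ← (SemiconjBy.zpow_braid h hε δ).eq]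
  group

section

variable {n : ℕ}

theorem braidGen_braid {i j : Fin n} (h : (i : ℕ) + 1 = j) :
    braidGen i * braidGen j * braidGen i = braidGen j * braidGen i * braidGen j :=
  PresentedGroup.mk_eq_mk_of_mul_inv_mem (Or.inl ⟨i, j, h, rfl⟩)

theorem braidGen_commute {i j : Fin n} (h : (i : ℕ) + 2 ≤ j) :
    Commute (braidGen i) (braidGen j) :=
  PresentedGroup.mk_eq_mk_of_mul_inv_mem (Or.inr ⟨i, j, h, rfl⟩)

theorem braidLetter_mul_natCast {ε : ℤ} (hε : ε.natAbs = 1) {k : ℕ} (hk : 0 < k)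
    (hkn : k - 1 < n) : braidLetter n (ε * k) = braidGen ⟨k - 1, hkn⟩ ^ ε := by
  rcases Int.natAbs_eq_iff.mp hε with rfl | rfl <;> simp [braidLetter, hkn, hk]

theorem braidLetter_eq_zpow {a : ℤ} (ha : a ≠ 0) (han : a.natAbs - 1 < n) :
    braidLetter n a = braidGen ⟨a.natAbs - 1, han⟩ ^ a.sign := by
  conv_lhs => rw [← Int.sign_mul_natAbs a]
  exact braidLetter_mul_natCast (Int.natAbs_sign_of_ne_zero ha) (Int.natAbs_pos.mpr ha) han

theorem braidLetter_of_le {a : ℤ} (h : n ≤ a.natAbs - 1) : braidLetter n a = 1 :=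
  dif_neg (by omega)

theorem braidLetter_neg {a : ℤ} (ha : a ≠ 0) : braidLetter n (-a) = (braidLetter n a)⁻¹ := by
  by_cases han : a.natAbs - 1 < n
  · have hna : (-a).natAbs - 1 < n := by rwa [Int.natAbs_neg]
    rw [braidLetter_eq_zpow ha han, braidLetter_eq_zpow (neg_ne_zero.mpr ha) hna]
    simp only [Int.natAbs_neg, Int.sign_neg, zpow_neg]
  · rw [braidLetter_of_le (a := -a) (by rw [Int.natAbs_neg]; omega), braidLetter_of_le (by omega),
      inv_one]

theorem braidLetter_commute {a b : ℤ} (ha : a ≠ 0) (hb : b ≠ 0) (h : a.natAbs + 2 ≤ b.natAbs) :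
    Commute (braidLetter n a) (braidLetter n b) := by
  by_cases hbn : b.natAbs - 1 < n
  · rw [braidLetter_eq_zpow ha (by omega), braidLetter_eq_zpow hb hbn]
    exact (braidGen_commute (by simp only; omega)).zpow_zpow _ _
  · rw [braidLetter_of_le (a := b) (by omega)]
    exact Commute.one_right _

@[simp] theorem braidWord_nil : braidWord n [] = 1 := rfl

@[simp] theorem braidWord_cons (a : ℤ) (w : List ℤ) :
    braidWord n (a :: w) = braidLetter n a * braidWord n w :=
  List.prod_cons

@[simp] theorem braidWord_append (u v : List ℤ) :
    braidWord n (u ++ v) = braidWord n u * braidWord n v := by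
  simp [braidWord]

theorem braidWord_reverse_neg {w : List ℤ} (hw : 0 ∉ w) :
    braidWord n (w.map (- ·)).reverse = (braidWord n w)⁻¹ := by
  induction w with
  | nil => simp
  | cons a w ih =>
    rw [List.mem_cons, not_or] at hw
    simp [ih hw.2, braidLetter_neg (Ne.symm hw.1)]

end

inductive BraidMove
  | cancel
  | swap
  | braid

namespace BraidMove

/-- The `braid` move rewrites `σ_i^ε σ_{i+1}^δ` as `σ_{i+1}^{-ε} σ_i^δ σ_{i+1}^ε σ_i^ε`,
which is `zpow_mul_zpow_of_braid`. -/
def rewritePair (n : ℕ) : BraidMove → ℤ → ℤ → Option (List ℤ)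
  | cancel, a, b => if a ≠ 0 ∧ b = -a then some [] else none
  | swap, a, b =>
    if a ≠ 0 ∧ b ≠ 0 ∧ (a.natAbs + 2 ≤ b.natAbs ∨ b.natAbs + 2 ≤ a.natAbs) then some [b, a]
    else none
  | braid, a, b =>
    if a ≠ 0 ∧ b.natAbs = a.natAbs + 1 ∧ b.natAbs ≤ n then
      some [-a.sign * b.natAbs, b.sign * a.natAbs, a.sign * b.natAbs, a]
    else none

def rewriteAt (n : ℕ) (m : BraidMove) (p : ℕ) (w : List ℤ) : Option (List ℤ) :=
  match w.drop p with
  | a :: b :: t => (m.rewritePair n a b).map fun u => w.take p ++ u ++ t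
  | _ => none

def rewriteAll (n : ℕ) : List (BraidMove × ℕ) → List ℤ → Option (List ℤ)
  | [], w => some w
  | (m, p) :: ms, w => (m.rewriteAt n p w).bind (rewriteAll n ms)

variable {n : ℕ}

theorem braidWord_eq_of_rewritePair {m : BraidMove} {a b : ℤ} {u : List ℤ}
    (h : m.rewritePair n a b = some u) : braidWord n [a, b] = braidWord n u := by
  cases m <;> simp only [rewritePair, Option.ite_none_right_eq_some, Option.some.injEq] at h
  case cancel =>
    obtain ⟨⟨ha, rfl⟩, rfl⟩ := h
    simp [braidLetter_neg ha]
  case swap =>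
    obtain ⟨⟨ha, hb, hab | hba⟩, rfl⟩ := h
    · simpa using (braidLetter_commute ha hb hab).eq
    · simpa using (braidLetter_commute hb ha hba).eq.symm
  case braid =>
    obtain ⟨⟨ha, hab, hbn⟩, rfl⟩ := h
    have hb : b ≠ 0 := by omega
    have hε := Int.natAbs_sign_of_ne_zero ha
    have hs := braidLetter_eq_zpow (n := n) ha (by omega)
    have ht := braidLetter_eq_zpow (n := n) hb (by omega)
    simp only [braidWord_cons, braidWord_nil, mul_one, ← mul_assoc, hs, ht,
      braidLetter_mul_natCast hε (Int.natAbs_pos.mpr hb) (by omega : b.natAbs - 1 < n),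
      braidLetter_mul_natCast (Int.natAbs_sign_of_ne_zero hb) (Int.natAbs_pos.mpr ha)
        (by omega : a.natAbs - 1 < n),
      braidLetter_mul_natCast (by rwa [Int.natAbs_neg]) (Int.natAbs_pos.mpr hb)
        (by omega : b.natAbs - 1 < n)]
    exact zpow_mul_zpow_of_braid (braidGen_braid (by simp only; omega)) hε _

theorem braidWord_eq_of_rewriteAt {m : BraidMove} {p : ℕ} {w w' : List ℤ}
    (h : m.rewriteAt n p w = some w') : braidWord n w = braidWord n w' := by
  unfold rewriteAt at h
  split at h
  · next a b t hw =>
    obtain ⟨u, hu, rfl⟩ := Option.map_eq_some_iff.mp h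
    conv_lhs => rw [← List.take_append_drop p w, hw, show a :: b :: t = [a, b] ++ t from rfl]
    rw [braidWord_append, braidWord_append, braidWord_append, braidWord_append,
      braidWord_eq_of_rewritePair hu, mul_assoc]
  · cases h

theorem braidWord_eq_of_rewriteAll {ms : List (BraidMove × ℕ)} {w w' : List ℤ}
    (h : rewriteAll n ms w = some w') : braidWord n w = braidWord n w' := by
  induction ms generalizing w with
  | nil => cases h; rfl
  | cons mp ms ih =>
    obtain ⟨v, hv, hv'⟩ := Option.bind_eq_some_iff.mp h
    exact (braidWord_eq_of_rewriteAt hv).trans (ih hv')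

theorem braidWord_conj_eq_of_rewriteAll {ms : List (BraidMove × ℕ)} {g a r : List ℤ}
    (h0 : 0 ∉ a ++ r) (h : rewriteAll n ms (((a ++ r).map (- ·)).reverse ++ g ++ a) = some []) :
    (braidWord n a)⁻¹ * braidWord n g * braidWord n a = braidWord n r := by
  have h1 := braidWord_eq_of_rewriteAll h
  rw [braidWord_append, braidWord_append, braidWord_reverse_neg h0, braidWord_append,
    braidWord_nil, mul_inv_rev, mul_assoc, mul_assoc, inv_mul_eq_one] at h1
  rw [h1, mul_assoc]

end BraidMove

def o9_40504Moves : List (BraidMove × ℕ) := [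
  (.braid, 49), (.swap, 52), (.cancel, 53), (.braid, 51), (.cancel, 54), (.swap, 46), (.swap, 47),
  (.swap, 48), (.swap, 49), (.swap, 50), (.swap, 51), (.swap, 52), (.braid, 53), (.swap, 56),
  (.cancel, 57), (.swap, 45), (.swap, 46), (.swap, 47), (.braid, 48), (.swap, 51), (.swap, 52),
  (.swap, 53), (.cancel, 54), (.braid, 44), (.swap, 47), (.braid, 48), (.cancel, 51),
  (.cancel, 43), (.braid, 44), (.cancel, 47), (.swap, 55), (.cancel, 56), (.swap, 54), (.swap, 55),
  (.swap, 56), (.cancel, 57), (.cancel, 53), (.swap, 50), (.braid, 51), (.cancel, 54),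
  (.cancel, 53), (.swap, 41), (.swap, 42), (.swap, 43), (.swap, 44), (.swap, 45), (.swap, 46),
  (.swap, 47), (.braid, 48), (.swap, 51), (.swap, 52), (.swap, 53), (.cancel, 54), (.swap, 40),
  (.braid, 41), (.swap, 44), (.swap, 45), (.swap, 46), (.braid, 47), (.swap, 50), (.cancel, 51),
  (.swap, 39), (.cancel, 40), (.swap, 41), (.braid, 42), (.swap, 45), (.cancel, 46), (.swap, 36),
  (.swap, 37), (.swap, 38), (.braid, 39), (.swap, 42), (.swap, 43), (.swap, 44), (.swap, 45),
  (.swap, 46), (.braid, 47), (.swap, 50), (.swap, 51), (.cancel, 52), (.swap, 35), (.swap, 36),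
  (.swap, 37), (.cancel, 38), (.swap, 39), (.swap, 40), (.braid, 41), (.swap, 44), (.swap, 45),
  (.cancel, 46), (.swap, 50), (.swap, 51), (.braid, 52), (.cancel, 55), (.braid, 49),
  (.cancel, 52), (.swap, 48), (.braid, 49), (.swap, 52), (.cancel, 53), (.swap, 47), (.swap, 48),
  (.braid, 49), (.swap, 52), (.swap, 53), (.cancel, 54), (.swap, 46), (.swap, 47), (.swap, 48),
  (.braid, 49), (.swap, 52), (.swap, 53), (.swap, 54), (.swap, 55), (.cancel, 56), (.cancel, 45),
  (.cancel, 44), (.cancel, 43), (.cancel, 42), (.cancel, 47), (.braid, 45), (.cancel, 48),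
  (.swap, 44), (.braid, 45), (.swap, 48), (.cancel, 49), (.braid, 47), (.cancel, 50), (.swap, 46),
  (.braid, 47), (.swap, 50), (.cancel, 51), (.cancel, 50), (.cancel, 49), (.cancel, 48),
  (.swap, 43), (.swap, 44), (.swap, 45), (.swap, 46), (.swap, 47), (.cancel, 48), (.swap, 42),
  (.swap, 43), (.swap, 44), (.swap, 45), (.swap, 46), (.swap, 47), (.cancel, 48), (.swap, 38),
  (.swap, 39), (.swap, 40), (.swap, 41), (.swap, 42), (.swap, 43), (.swap, 44), (.swap, 45),
  (.swap, 46), (.swap, 47), (.cancel, 48), (.cancel, 37), (.cancel, 36), (.swap, 34),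
  (.cancel, 35), (.cancel, 34), (.cancel, 33), (.cancel, 32), (.swap, 31), (.swap, 32),
  (.swap, 33), (.swap, 34), (.braid, 35), (.cancel, 38), (.swap, 30), (.swap, 31), (.swap, 32),
  (.braid, 33), (.cancel, 36), (.braid, 29), (.swap, 32), (.braid, 33), (.cancel, 36),
  (.cancel, 28), (.braid, 29), (.cancel, 32), (.swap, 26), (.swap, 27), (.swap, 28), (.swap, 29),
  (.swap, 30), (.swap, 31), (.swap, 32), (.braid, 33), (.swap, 36), (.cancel, 37), (.swap, 25),
  (.braid, 26), (.swap, 29), (.swap, 30), (.swap, 31), (.braid, 32), (.swap, 35), (.cancel, 36),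
  (.swap, 24), (.cancel, 25), (.swap, 26), (.braid, 27), (.swap, 30), (.cancel, 31), (.swap, 21),
  (.swap, 22), (.swap, 23), (.braid, 24), (.swap, 27), (.swap, 28), (.swap, 29), (.swap, 30),
  (.swap, 31), (.braid, 32), (.swap, 35), (.swap, 36), (.cancel, 37), (.swap, 20), (.swap, 21),
  (.swap, 22), (.cancel, 23), (.swap, 16), (.swap, 17), (.swap, 18), (.swap, 19), (.swap, 20),
  (.swap, 21), (.cancel, 22), (.swap, 22), (.swap, 23), (.braid, 24), (.swap, 27), (.swap, 28),
  (.cancel, 29), (.cancel, 21), (.cancel, 20), (.swap, 18), (.cancel, 19), (.swap, 15),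
  (.swap, 16), (.swap, 17), (.cancel, 18), (.swap, 11), (.swap, 12), (.swap, 13), (.swap, 14),
  (.swap, 15), (.swap, 16), (.swap, 17), (.swap, 18), (.swap, 19), (.cancel, 20), (.braid, 25),
  (.swap, 28), (.swap, 29), (.swap, 30), (.braid, 31), (.swap, 34), (.swap, 35), (.braid, 36),
  (.swap, 39), (.swap, 40), (.swap, 41), (.swap, 42), (.braid, 43), (.cancel, 46), (.cancel, 24),
  (.cancel, 23), (.braid, 23), (.swap, 26), (.braid, 27), (.cancel, 30), (.cancel, 22),
  (.cancel, 21), (.braid, 21), (.cancel, 24), (.swap, 20), (.swap, 21), (.swap, 22), (.braid, 23),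
  (.swap, 26), (.cancel, 27), (.cancel, 19), (.cancel, 18), (.swap, 17), (.cancel, 18),
  (.swap, 10), (.swap, 11), (.braid, 12), (.swap, 15), (.swap, 16), (.swap, 17), (.swap, 18),
  (.cancel, 19), (.swap, 9), (.braid, 10), (.cancel, 13), (.braid, 8), (.cancel, 11), (.cancel, 7),
  (.swap, 19), (.braid, 20), (.cancel, 23), (.braid, 18), (.cancel, 21), (.swap, 17), (.braid, 18),
  (.swap, 21), (.cancel, 22), (.cancel, 16), (.braid, 14), (.cancel, 17), (.cancel, 13),
  (.braid, 12), (.swap, 15), (.cancel, 16), (.swap, 11), (.braid, 12), (.swap, 15), (.swap, 16),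
  (.swap, 17), (.swap, 18), (.swap, 19), (.cancel, 20), (.cancel, 10), (.cancel, 9), (.swap, 16),
  (.swap, 17), (.swap, 18), (.braid, 19), (.cancel, 22), (.braid, 15), (.braid, 18), (.braid, 21),
  (.cancel, 24), (.cancel, 14), (.cancel, 13), (.cancel, 13), (.braid, 11), (.cancel, 14),
  (.cancel, 14), (.braid, 12), (.cancel, 15), (.swap, 10), (.swap, 11), (.braid, 12), (.swap, 15),
  (.swap, 16), (.cancel, 17), (.swap, 9), (.swap, 10), (.swap, 11), (.braid, 12), (.swap, 15),
  (.swap, 16), (.swap, 17), (.swap, 18), (.cancel, 19), (.cancel, 8), (.braid, 7), (.cancel, 10),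
  (.cancel, 6), (.cancel, 5), (.cancel, 26), (.cancel, 25), (.swap, 23), (.cancel, 24),
  (.swap, 14), (.swap, 15), (.swap, 16), (.swap, 17), (.swap, 18), (.swap, 19), (.swap, 20),
  (.swap, 21), (.swap, 22), (.cancel, 23), (.cancel, 13), (.cancel, 12), (.cancel, 11),
  (.braid, 9), (.cancel, 12), (.braid, 10), (.cancel, 13), (.cancel, 12), (.cancel, 11),
  (.swap, 8), (.swap, 9), (.cancel, 10), (.swap, 7), (.swap, 8), (.swap, 9), (.swap, 10),
  (.cancel, 11), (.swap, 12), (.braid, 13), (.cancel, 16), (.braid, 11), (.cancel, 14),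
  (.cancel, 10), (.cancel, 9), (.swap, 6), (.swap, 7), (.swap, 8), (.cancel, 9), (.cancel, 5),
  (.cancel, 4), (.cancel, 3), (.braid, 1), (.cancel, 4), (.cancel, 0), (.cancel, 1), (.cancel, 0)]

set_option maxRecDepth 10000 in
theorem stmt14
    (γ α : BraidGroup 5)
    (hγ : γ = braidWord 5
      [1, 1, 2, 1, 3, 4, 3, 4, 3, 5, 4, 3, 5, 2, 4, 1, 3, 1, 2, 1, 3, 4, 5, 4, 3, 5, 4, 3, 5,
      5, 5, 4, 3, 2, 1, 3, 4, 5, 4, 4, 5, 4, 3, 2, 4, 3, 4])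
    (hα : α = braidWord 5
      [-4, -3, -2, -1, 5, 2, 4, 3, -5, -4, -3, 5, 4]) :
    α⁻¹ * γ * α = braidWord 5
      [1, 2, 3, 4, 5, 1, 2, 3, 4, 5, 1, 2, 3, 4, 5, 1, 2, 3, 4, 5, 1, 2, 3, 4, 5, 1, 2, 3, 4,
      5, 1, 2, 3, 4, 5, 1, 2, 3, 4, 5, 5, 4, 5, 5, 5, 4, 5] := by
  subst hγ hα
  exact BraidMove.braidWord_conj_eq_of_rewriteAll (ms := o9_40504Moves) (by decide) (by decide)
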